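/- arXiv:1101.0416 — 3 statements merged into one kernel-verified Lean document; each statement's English description precedes it below -/
import Mathlib

section
/- Let M be a finite monoid, let e, f ∈ M be idempotents, set X = MeM, Y = MfM, and let m ∈ M satisfy m = f*m*e. Then the following are equivalent: (a) for every idempotent e' ∈ M and all g, h ∈ M with g = f*g*e', h = e'*h*e and m = g*h, either Mh = Me or gM = fM (m is an almost irreducible morphism e → f in the Karoubi envelope); (b) for all a, b ∈ M with a = f*a, b = b*e and m = a*b, either aM = fM or Mb = Me; (c) there do not exist s, t ∈ M with m = s*t, ¬(Y ⊆ MsM) and ¬(X ⊆ MtM), i.e. m ∉ nup(Y)·nup(X). Moreover, m satisfies these equivalent conditions together with Mm ≠ Me and mM ≠ fM (i.e. m : e → f is an irreducible morphism of the Karoubi envelope) if and only if m ∉ nup(Y)·nup(X) and m is not regular. -/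
/-- `Mx = {a*x | a ∈ M}` -/
def leftIdeal {M : Type*} [Monoid M] (x : M) : Set M := {y | ∃ a, y = a * x}

/-- `xM = {x*a | a ∈ M}` -/
def rightIdeal {M : Type*} [Monoid M] (x : M) : Set M := {y | ∃ a, y = x * a}

/-- `MxM = {a*x*b | a,b ∈ M}` -/
def twoSidedIdeal {M : Type*} [Monoid M] (x : M) : Set M := {y | ∃ a b, y = a * x * b}

/-- `nup(X) = {m ∈ M | ¬(X ⊆ MmM)}` -/
def nup {M : Type*} [Monoid M] (X : Set M) : Set M := {m | ¬ X ⊆ twoSidedIdeal m}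

/-- Every element of a finite monoid has an idempotent positive power. -/
private lemma exists_idem_pow {M : Type*} [Monoid M] [Fintype M] (c : M) :
    ∃ n, 1 ≤ n ∧ c ^ n * c ^ n = c ^ n := by
  obtain ⟨i, j, hne, hij⟩ := Finite.exists_ne_map_eq_of_infinite (fun n : ℕ => c ^ n)
  wlog hlt : i < j generalizing i j
  · exact this j i hne.symm hij.symm (by omega)
  set d := j - i with hd
  have hd1 : 1 ≤ d := by omega
  have step : ∀ k, i ≤ k → c ^ (k + d) = c ^ k := by
    intro k hk
    have h1 : c ^ (k + d) = c ^ (k - i) * c ^ (i + d) := by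
      rw [← pow_add]; congr 1; omega
    have h2 : i + d = j := by omega
    rw [h1, h2, ← hij, ← pow_add]
    congr 1; omega
  have rep : ∀ t k, i ≤ k → c ^ (k + t * d) = c ^ k := by
    intro t
    induction t with
    | zero => simp
    | succ s ih =>
      intro k hk
      have h3 : k + (s + 1) * d = (k + s * d) + d := by ring
      rw [h3, step _ (by omega), ih k hk]
  refine ⟨(i + 1) * d, by nlinarith, ?_⟩
  rw [← pow_add]
  exact rep (i + 1) ((i + 1) * d) (by nlinarith)

/-- Stability (R-version): if `x ≤_R y` and `y ≤_J x` then `y ∈ xM`. -/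
private lemma r_stab {M : Type*} [Monoid M] [Fintype M] {x y s p q : M}
    (h1 : x = y * s) (h2 : y = p * x * q) : ∃ r, y = x * r := by
  have key : ∀ n, y = p ^ n * y * (s * q) ^ n := by
    intro n
    induction n with
    | zero => simp
    | succ k ih =>
      calc y = p * x * q := h2
        _ = p * ((p ^ k * y * (s * q) ^ k) * s) * q := by rw [← ih, ← h1]
        _ = p ^ (k + 1) * y * (s * q) ^ (k + 1) := by
            rw [pow_succ' p, pow_succ (s * q)]
            simp only [mul_assoc]
  obtain ⟨n, hn1, hidem⟩ := exists_idem_pow (s * q)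
  have hy : y * (s * q) ^ n = y := by
    conv_lhs => rw [key n]
    rw [mul_assoc, hidem, ← key n]
  refine ⟨q * (s * q) ^ (n - 1), ?_⟩
  have hsplit : (s * q) ^ n = s * (q * (s * q) ^ (n - 1)) := by
    conv_lhs => rw [show n = (n - 1) + 1 by omega]
    rw [pow_succ' (s * q)]
    simp only [mul_assoc]
  rw [h1, mul_assoc, ← hsplit, hy]

/-- Stability (L-version). -/
private lemma l_stab {M : Type*} [Monoid M] [Fintype M] {x y s p q : M}
    (h1 : x = s * y) (h2 : y = p * x * q) : ∃ r, y = r * x := by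
  have key : ∀ n, y = (p * s) ^ n * y * q ^ n := by
    intro n
    induction n with
    | zero => simp
    | succ k ih =>
      calc y = p * x * q := h2
        _ = p * (s * ((p * s) ^ k * y * q ^ k)) * q := by rw [← ih, ← h1]
        _ = (p * s) ^ (k + 1) * y * q ^ (k + 1) := by
            rw [pow_succ' (p * s), pow_succ q]
            simp only [mul_assoc]
  obtain ⟨n, hn1, hidem⟩ := exists_idem_pow (p * s)
  have hy : (p * s) ^ n * y = y := by
    conv_lhs => rw [key n]
    rw [← mul_assoc, ← mul_assoc, hidem, ← key n]
  refine ⟨(p * s) ^ (n - 1) * p, ?_⟩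
  have hsplit : (p * s) ^ n = ((p * s) ^ (n - 1) * p) * s := by
    conv_lhs => rw [show n = (n - 1) + 1 by omega]
    rw [pow_succ (p * s)]
    simp only [mul_assoc]
  calc y = (p * s) ^ n * y := hy.symm
    _ = ((p * s) ^ (n - 1) * p) * (s * y) := by rw [hsplit, mul_assoc]
    _ = ((p * s) ^ (n - 1) * p) * x := by rw [← h1]

/-- If `a = f*a` and `f ∈ MaM` then `aM = fM`. -/
private lemma r_green {M : Type*} [Monoid M] [Fintype M] {a f u v : M}
    (h1 : a = f * a) (h2 : f = u * a * v) : rightIdeal a = rightIdeal f := by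
  obtain ⟨r, hr⟩ := r_stab h1 h2
  ext z
  constructor
  · rintro ⟨c, rfl⟩
    exact ⟨a * c, by rw [← mul_assoc, ← h1]⟩
  · rintro ⟨c, rfl⟩
    exact ⟨r * c, by rw [← mul_assoc, ← hr]⟩

/-- If `b = b*e` and `e ∈ MbM` then `Mb = Me`. -/
private lemma l_green {M : Type*} [Monoid M] [Fintype M] {b e u v : M}
    (h1 : b = b * e) (h2 : e = u * b * v) : leftIdeal b = leftIdeal e := by
  obtain ⟨r, hr⟩ := l_stab (s := b) (by rw [← h1]) h2
  ext z
  constructor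
  · rintro ⟨c, rfl⟩
    exact ⟨c * b, by rw [mul_assoc, ← h1]⟩
  · rintro ⟨c, rfl⟩
    exact ⟨c * r, by rw [mul_assoc, ← hr]⟩

/-- `s ∈ nup(MfM)` iff `f ∉ MsM`. -/
private lemma nup_mem {M : Type*} [Monoid M] (f s : M) :
    s ∈ nup (twoSidedIdeal f) ↔ f ∉ twoSidedIdeal s := by
  constructor
  · intro h hf
    refine h ?_
    rintro z ⟨a, b, rfl⟩
    obtain ⟨u, v, huv⟩ := hf
    exact ⟨a * u, v * b, by rw [huv]; simp only [mul_assoc]⟩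
  · intro h hsub
    exact h (hsub ⟨1, 1, by simp⟩)

/-- Characterization of the almost irreducible and irreducible morphisms `m : e → f`
in the Karoubi envelope of a finite monoid. -/
theorem almost_irreducible_and_irreducible_characterization
    {M : Type*} [Monoid M] [Fintype M] (e f m : M)
    (he : e * e = e) (hf : f * f = f) (hm : m = f * m * e) :
    -- (a), (b), (c) are equivalent
    (((∀ e' g h : M, e' * e' = e' → g = f * g * e' → h = e' * h * e → m = g * h →
        leftIdeal h = leftIdeal e ∨ rightIdeal g = rightIdeal f) ↔
      (∀ a b : M, a = f * a → b = b * e → m = a * b →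
        rightIdeal a = rightIdeal f ∨ leftIdeal b = leftIdeal e)) ∧
    ((∀ a b : M, a = f * a → b = b * e → m = a * b →
        rightIdeal a = rightIdeal f ∨ leftIdeal b = leftIdeal e) ↔
      ¬ ∃ s t : M, m = s * t ∧ s ∈ nup (twoSidedIdeal f) ∧ t ∈ nup (twoSidedIdeal e))) ∧
    -- moreover: irreducible ⟺ not in `nup(Y)·nup(X)` and not regular
    (((∀ e' g h : M, e' * e' = e' → g = f * g * e' → h = e' * h * e → m = g * h →
        leftIdeal h = leftIdeal e ∨ rightIdeal g = rightIdeal f) ∧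
      leftIdeal m ≠ leftIdeal e ∧ rightIdeal m ≠ rightIdeal f) ↔
      ((¬ ∃ s t : M, m = s * t ∧ s ∈ nup (twoSidedIdeal f) ∧ t ∈ nup (twoSidedIdeal e)) ∧
        ¬ ∃ u : M, m = m * u * m)) := by
  -- basic consequences of m = f*m*e
  have hme : m * e = m := by
    conv_lhs => rw [hm]
    rw [mul_assoc, he, ← hm]
  have hfm : f * m = m := by
    conv_lhs => rw [hm]
    rw [← mul_assoc, ← mul_assoc, hf, ← hm]
  -- (a) ↔ (b)
  have hAB : (∀ e' g h : M, e' * e' = e' → g = f * g * e' → h = e' * h * e → m = g * h →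
      leftIdeal h = leftIdeal e ∨ rightIdeal g = rightIdeal f) ↔
      (∀ a b : M, a = f * a → b = b * e → m = a * b →
      rightIdeal a = rightIdeal f ∨ leftIdeal b = leftIdeal e) := by
    constructor
    · intro H a b ha hb hab
      have := H 1 a b (by simp) (by rw [mul_one, ← ha]) (by rw [one_mul, ← hb]) hab
      tauto
    · intro H e' g h he' hg hh hgh
      have hga : g = f * g := by
        calc g = f * g * e' := hg
          _ = f * f * g * e' := by rw [hf]
          _ = f * (f * g * e') := by simp only [mul_assoc]
          _ = f * g := by rw [← hg]
      have hhb : h = h * e := by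
        calc h = e' * h * e := hh
          _ = e' * h * (e * e) := by rw [he]
          _ = (e' * h * e) * e := by rw [mul_assoc (e' * h) e e]
          _ = h * e := by rw [← hh]
      have := H g h hga hhb hgh
      tauto
  -- (b) ↔ (c)
  have hBC : (∀ a b : M, a = f * a → b = b * e → m = a * b →
      rightIdeal a = rightIdeal f ∨ leftIdeal b = leftIdeal e) ↔
      ¬ ∃ s t : M, m = s * t ∧ s ∈ nup (twoSidedIdeal f) ∧ t ∈ nup (twoSidedIdeal e) := by
    constructor
    · rintro H ⟨s, t, hst, hs, ht⟩
      rw [nup_mem] at hs ht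
      -- take a = f*s, b = t*e
      have ha : f * s = f * (f * s) := by rw [← mul_assoc, hf]
      have hb : t * e = (t * e) * e := by rw [mul_assoc, he]
      have hab : m = (f * s) * (t * e) := by
        calc m = f * m * e := hm
          _ = f * (s * t) * e := by rw [← hst]
          _ = (f * s) * (t * e) := by simp only [mul_assoc]
      rcases H (f * s) (t * e) ha hb hab with h1 | h1
      · -- f ∈ (f*s)M ⊆ MsM
        have : f ∈ rightIdeal (f * s) := by rw [h1]; exact ⟨1, by simp⟩
        obtain ⟨c, hc⟩ := this
        exact hs ⟨f, c, hc⟩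
      · -- e ∈ M(t*e) ⊆ MtM
        have : e ∈ leftIdeal (t * e) := by rw [h1]; exact ⟨1, by simp⟩
        obtain ⟨c, hc⟩ := this
        exact ht ⟨c, e, by rw [mul_assoc]; exact hc⟩
    · intro H a b ha hb hab
      by_contra hcon
      push_neg at hcon
      obtain ⟨h1, h2⟩ := hcon
      refine H ⟨a, b, hab, ?_, ?_⟩
      · rw [nup_mem]
        rintro ⟨u, v, huv⟩
        exact h1 (r_green ha huv)
      · rw [nup_mem]
        rintro ⟨u, v, huv⟩
        exact h2 (l_green hb huv)
  refine ⟨⟨hAB, hBC⟩, ?_⟩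
  -- moreover part
  constructor
  · rintro ⟨hA, hL, hR⟩
    refine ⟨(hBC.mp (hAB.mp hA)), ?_⟩
    rintro ⟨u, hu⟩
    -- m regular: m = m*u*m. Apply (b) with a = m*u, b = m.
    have hB := hAB.mp hA
    have ha : m * u = f * (m * u) := by rw [← mul_assoc, hfm]
    have hb : m = m * e := hme.symm
    rcases hB (m * u) m ha hb hu with h1 | h1
    · -- (m*u)M = fM, so f ∈ mM and mM = fM
      apply hR
      ext z
      constructor
      · rintro ⟨c, rfl⟩
        exact ⟨m * c, by rw [← mul_assoc, hfm]⟩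
      · rintro ⟨c, rfl⟩
        have : f ∈ rightIdeal (m * u) := by rw [h1]; exact ⟨1, by simp⟩
        obtain ⟨d, hd⟩ := this
        exact ⟨u * d * c, by rw [hd]; simp only [mul_assoc]⟩
    · exact hL h1
  · rintro ⟨hC, hreg⟩
    refine ⟨hAB.mpr (hBC.mpr hC), ?_, ?_⟩
    · -- Mm = Me would give e = u*m, so m = m*e = m*u*m, regular
      intro hL
      have : e ∈ leftIdeal m := by rw [hL]; exact ⟨1, by simp⟩
      obtain ⟨u, hu⟩ := this
      refine hreg ⟨u, ?_⟩
      calc m = m * e := hme.symm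
        _ = m * (u * m) := by rw [hu]
        _ = m * u * m := by rw [mul_assoc]
    · -- mM = fM would give f = m*v, so m = f*m = m*v*m, regular
      intro hR
      have : f ∈ rightIdeal m := by rw [hR]; exact ⟨1, by simp⟩
      obtain ⟨v, hv⟩ := this
      refine hreg ⟨v, ?_⟩
      calc m = f * m := hfm.symm
        _ = m * v * m := by rw [hv]
end

section
/- Let M be a finite rectangular monoid generated by its regular elements (every element of M is a product of regular elements). Let e, f ∈ M be idempotents, X = MeM, Y = MfM, and let m ∈ M satisfy m = f*m*e and m ∉ nup(Y)·nup(X). Then: (1) if X ⊄ Y and Y ⊄ X, there exist a, b ∈ M with m = b*a, Ma = Me and bM = fM (m factors as a split monomorphism followed by a split epimorphism in the Karoubi envelope); (2) if X ⊊ Y, then Mm = Me; (3) if Y ⊊ X, then mM = fM; (4) if e = f, then m is a unit of the monoid e*M*e. Conversely, in cases (2), (3) and (4), every m ∈ M with m = f*m*e satisfying respectively Mm = Me, mM = fM, or m a unit of e*M*e, satisfies m ∉ nup(Y)·nup(X). -/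
/-- A finite monoid is rectangular if for all idempotents `e, f` with `MeM = MfM`,
the product `e*f` is idempotent and `M(e*f)M = MeM`. -/
def IsRectangular (M : Type*) [Monoid M] : Prop :=
  ∀ e f : M, e * e = e → f * f = f → twoSidedIdeal e = twoSidedIdeal f →
    (e * f) * (e * f) = e * f ∧ twoSidedIdeal (e * f) = twoSidedIdeal e

/-!
By hypothesis, every factorization `m = s * t` has `f ∈ MsM` or `e ∈ MtM`. Write
`m = f * r₁ * ⋯ * rₙ * e` with regular `rᵢ` and let `b = f * r₁ * ⋯ * rᵢ` be the longest prefix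
still generating `MfM`. If `i < n`, then `rᵢ₊₁ = rᵢ₊₁ * w * rᵢ₊₁` gives
`m = (b * rᵢ₊₁ * w) * (rᵢ₊₁ * ⋯ * rₙ * e)`, whose left factor no longer generates `MfM`; so the
right factor `a` generates `MeM`. Stability of finite monoids (`x ∈ M(xy)M` implies `x ∈ xyM`)
upgrades `f ∈ MbM`, `e ∈ MaM` to `bM = fM`, `Ma = Me`, which is (1). Rectangularity, applied to
idempotents built from regular `u`, `v` with `v ∈ MuM`, gives `v ∈ M(uv)M`, hence `M(uv) = Mv`
by stability; with `u = b`, `v = a` this is (2), dually (3), and both together give (4).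
-/

section Ideals

variable {M : Type*} [Monoid M] {x y z : M}

lemma mem_leftIdeal_self (x : M) : x ∈ leftIdeal x := ⟨1, (one_mul x).symm⟩

lemma mem_rightIdeal_self (x : M) : x ∈ rightIdeal x := ⟨1, (mul_one x).symm⟩

lemma mem_twoSidedIdeal_self (x : M) : x ∈ twoSidedIdeal x := ⟨1, 1, by simp⟩

lemma mul_mem_leftIdeal (x y : M) : x * y ∈ leftIdeal y := ⟨x, rfl⟩

lemma mul_mem_rightIdeal (x y : M) : x * y ∈ rightIdeal x := ⟨y, rfl⟩

lemma leftIdeal_subset_of_mem (h : x ∈ leftIdeal y) : leftIdeal x ⊆ leftIdeal y := by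
  obtain ⟨a, rfl⟩ := h
  rintro _ ⟨c, rfl⟩
  exact ⟨c * a, (mul_assoc c a y).symm⟩

lemma rightIdeal_subset_of_mem (h : x ∈ rightIdeal y) : rightIdeal x ⊆ rightIdeal y := by
  obtain ⟨a, rfl⟩ := h
  rintro _ ⟨c, rfl⟩
  exact ⟨a * c, mul_assoc y a c⟩

lemma twoSidedIdeal_subset_of_mem (h : x ∈ twoSidedIdeal y) :
    twoSidedIdeal x ⊆ twoSidedIdeal y := by
  obtain ⟨a, b, rfl⟩ := h
  rintro _ ⟨c, d, rfl⟩
  exact ⟨c * a, b * d, by simp only [mul_assoc]⟩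

lemma mem_twoSidedIdeal_trans (hxy : x ∈ twoSidedIdeal y) (hyz : y ∈ twoSidedIdeal z) :
    x ∈ twoSidedIdeal z :=
  twoSidedIdeal_subset_of_mem hyz hxy

lemma mem_twoSidedIdeal_of_mem_leftIdeal (h : x ∈ leftIdeal y) : x ∈ twoSidedIdeal y := by
  obtain ⟨a, rfl⟩ := h
  exact ⟨a, 1, (mul_one _).symm⟩

lemma mem_twoSidedIdeal_of_mem_rightIdeal (h : x ∈ rightIdeal y) : x ∈ twoSidedIdeal y := by
  obtain ⟨a, rfl⟩ := h
  exact ⟨1, a, by rw [one_mul]⟩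

lemma twoSidedIdeal_eq_of_leftIdeal_eq (h : leftIdeal x = leftIdeal y) :
    twoSidedIdeal x = twoSidedIdeal y :=
  (twoSidedIdeal_subset_of_mem
      (mem_twoSidedIdeal_of_mem_leftIdeal (h ▸ mem_leftIdeal_self x))).antisymm
    (twoSidedIdeal_subset_of_mem
      (mem_twoSidedIdeal_of_mem_leftIdeal (h ▸ mem_leftIdeal_self y)))

lemma twoSidedIdeal_eq_of_rightIdeal_eq (h : rightIdeal x = rightIdeal y) :
    twoSidedIdeal x = twoSidedIdeal y :=
  (twoSidedIdeal_subset_of_mem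
      (mem_twoSidedIdeal_of_mem_rightIdeal (h ▸ mem_rightIdeal_self x))).antisymm
    (twoSidedIdeal_subset_of_mem
      (mem_twoSidedIdeal_of_mem_rightIdeal (h ▸ mem_rightIdeal_self y)))

lemma mem_nup_twoSidedIdeal_iff : y ∈ nup (twoSidedIdeal x) ↔ x ∉ twoSidedIdeal y :=
  ⟨fun h hx => h (twoSidedIdeal_subset_of_mem hx),
    fun h hs => h (hs (mem_twoSidedIdeal_self x))⟩

lemma notMem_nup_of_mem_leftIdeal_mul (h : x ∈ leftIdeal (y * z)) :
    z ∉ nup (twoSidedIdeal x) :=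
  mem_nup_twoSidedIdeal_iff.not_left.2 <|
    mem_twoSidedIdeal_of_mem_leftIdeal (leftIdeal_subset_of_mem (mul_mem_leftIdeal y z) h)

lemma notMem_nup_of_mem_rightIdeal_mul (h : x ∈ rightIdeal (y * z)) :
    y ∉ nup (twoSidedIdeal x) :=
  mem_nup_twoSidedIdeal_iff.not_left.2 <|
    mem_twoSidedIdeal_of_mem_rightIdeal (rightIdeal_subset_of_mem (mul_mem_rightIdeal y z) h)

end Ideals

section Stability

variable {M : Type*} [Monoid M] {a b c x : M}

lemma exists_pow_eq_pow_add_succ [Finite M] (x : M) : ∃ i d, x ^ i = x ^ (i + (d + 1)) := by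
  obtain ⟨i, j, hne, hij⟩ := Finite.exists_ne_map_eq_of_infinite (fun n : ℕ => x ^ n)
  rcases hne.lt_or_gt with h | h
  · obtain ⟨d, rfl⟩ := Nat.exists_eq_add_of_lt h
    exact ⟨i, d, hij⟩
  · obtain ⟨d, rfl⟩ := Nat.exists_eq_add_of_lt h
    exact ⟨j, d, hij.symm⟩

lemma eq_pow_mul_mul_pow (h : a = x * a * c) (n : ℕ) : a = x ^ n * a * c ^ n := by
  induction n with
  | zero => simp
  | succ n ih =>
    calc a = x ^ n * (x * a * c) * c ^ n := by rw [← h, ← ih]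
      _ = x ^ (n + 1) * a * c ^ (n + 1) := by rw [pow_succ x, pow_succ' c]; simp only [mul_assoc]

lemma exists_eq_mul_pow_succ [Finite M] (h : a = x * a * c) : ∃ d, a = a * c ^ (d + 1) := by
  obtain ⟨i, d, hx⟩ := exists_pow_eq_pow_add_succ x
  refine ⟨d, ?_⟩
  calc a = x ^ (i + (d + 1)) * a * c ^ (i + (d + 1)) := eq_pow_mul_mul_pow h _
    _ = (x ^ i * a * c ^ i) * c ^ (d + 1) := by rw [← hx, pow_add c, ← mul_assoc]
    _ = a * c ^ (d + 1) := by rw [← eq_pow_mul_mul_pow h i]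

lemma exists_eq_pow_succ_mul [Finite M] (h : a = x * a * c) : ∃ d, a = x ^ (d + 1) * a := by
  obtain ⟨i, d, hc⟩ := exists_pow_eq_pow_add_succ c
  refine ⟨d, ?_⟩
  calc a = x ^ (i + (d + 1)) * a * c ^ (i + (d + 1)) := eq_pow_mul_mul_pow h _
    _ = x ^ (d + 1) * (x ^ i * a * c ^ i) := by
      rw [← hc, add_comm i, pow_add x]; simp only [mul_assoc]
    _ = x ^ (d + 1) * a := by rw [← eq_pow_mul_mul_pow h i]

lemma mem_rightIdeal_mul_of_mem_twoSidedIdeal_mul [Finite M] (h : a ∈ twoSidedIdeal (a * b)) :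
    a ∈ rightIdeal (a * b) := by
  obtain ⟨x, y, hxy⟩ := h
  obtain ⟨d, hd⟩ := exists_eq_mul_pow_succ (a := a) (x := x) (c := b * y)
    (by simpa only [mul_assoc] using hxy)
  exact ⟨y * (b * y) ^ d, hd.trans (by rw [pow_succ']; simp only [mul_assoc])⟩

lemma mem_leftIdeal_mul_of_mem_twoSidedIdeal_mul [Finite M] (h : a ∈ twoSidedIdeal (b * a)) :
    a ∈ leftIdeal (b * a) := by
  obtain ⟨x, y, hxy⟩ := h
  obtain ⟨d, hd⟩ := exists_eq_pow_succ_mul (a := a) (x := x * b) (c := y)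
    (by simpa only [mul_assoc] using hxy)
  exact ⟨(x * b) ^ d * x, hd.trans (by rw [pow_succ]; simp only [mul_assoc])⟩

lemma rightIdeal_mul_eq_of_mem_twoSidedIdeal_mul [Finite M] (h : a ∈ twoSidedIdeal (a * b)) :
    rightIdeal (a * b) = rightIdeal a :=
  (rightIdeal_subset_of_mem (mul_mem_rightIdeal a b)).antisymm
    (rightIdeal_subset_of_mem (mem_rightIdeal_mul_of_mem_twoSidedIdeal_mul h))

lemma leftIdeal_mul_eq_of_mem_twoSidedIdeal_mul [Finite M] (h : a ∈ twoSidedIdeal (b * a)) :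
    leftIdeal (b * a) = leftIdeal a :=
  (leftIdeal_subset_of_mem (mul_mem_leftIdeal b a)).antisymm
    (leftIdeal_subset_of_mem (mem_leftIdeal_mul_of_mem_twoSidedIdeal_mul h))

end Stability

section Rectangular

variable {M : Type*} [Monoid M] {s g u v p q : M}

lemma isIdempotentElem_mul_left_of_eq_mul_mul (h : u = u * p * u) : IsIdempotentElem (p * u) :=
  calc p * u * (p * u) = p * (u * p * u) := by simp only [mul_assoc]
    _ = p * u := by rw [← h]

lemma isIdempotentElem_mul_right_of_eq_mul_mul (h : u = u * p * u) : IsIdempotentElem (u * p) :=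
  calc u * p * (u * p) = (u * p * u) * p := by simp only [mul_assoc]
    _ = u * p := by rw [← h]

lemma exists_isIdempotentElem_eq_mul_mul_twoSidedIdeal_eq (hs : IsIdempotentElem s)
    (hg : IsIdempotentElem g) (h : g ∈ twoSidedIdeal s) :
    ∃ c, IsIdempotentElem c ∧ s * c * s = c ∧ twoSidedIdeal c = twoSidedIdeal g := by
  obtain ⟨x, y, hxy⟩ := h
  refine ⟨s * y * g * x * s, ?_, ?_, ?_⟩
  · calc s * y * g * x * s * (s * y * g * x * s)
          = s * y * g * (x * (s * s) * y) * g * x * s := by simp only [mul_assoc]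
      _ = s * y * (g * g * g) * x * s := by rw [hs.eq, ← hxy]; simp only [mul_assoc]
      _ = s * y * g * x * s := by rw [hg.eq, hg.eq]
  · calc s * (s * y * g * x * s) * s = (s * s) * y * g * x * (s * s) := by simp only [mul_assoc]
      _ = s * y * g * x * s := by rw [hs.eq]
  · refine (twoSidedIdeal_subset_of_mem ⟨s * y, x * s, by simp only [mul_assoc]⟩).antisymm
      (twoSidedIdeal_subset_of_mem ⟨x, y, ?_⟩)
    calc g = g * g * g := by rw [hg.eq, hg.eq]
      _ = x * s * y * g * (x * s * y) := by rw [← hxy]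
      _ = x * (s * y * g * x * s) * y := by simp only [mul_assoc]

namespace IsRectangular

lemma mem_twoSidedIdeal_mul (hrect : IsRectangular M) {e f : M} (he : IsIdempotentElem e)
    (hf : IsIdempotentElem f) (h : twoSidedIdeal e = twoSidedIdeal f) :
    e ∈ twoSidedIdeal (e * f) := by
  rw [(hrect e f he hf h).2]
  exact mem_twoSidedIdeal_self e

lemma mem_twoSidedIdeal_mul_of_isIdempotentElem_left (hrect : IsRectangular M)
    (hs : IsIdempotentElem s) (hg : IsIdempotentElem g) (h : g ∈ twoSidedIdeal s) :
    g ∈ twoSidedIdeal (s * g) := by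
  obtain ⟨c, hc, hsc, hJ⟩ := exists_isIdempotentElem_eq_mul_mul_twoSidedIdeal_eq hs hg h
  have hcg : c * g ∈ twoSidedIdeal (s * g) :=
    ⟨s * c, 1, by rw [mul_one]; nth_rw 1 [← hsc]; simp only [mul_assoc]⟩
  exact mem_twoSidedIdeal_trans (hJ ▸ mem_twoSidedIdeal_self g)
    (mem_twoSidedIdeal_trans (hrect.mem_twoSidedIdeal_mul hc hg hJ) hcg)

lemma mem_twoSidedIdeal_mul_of_isIdempotentElem_right (hrect : IsRectangular M)
    (hs : IsIdempotentElem s) (hg : IsIdempotentElem g) (h : g ∈ twoSidedIdeal s) :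
    g ∈ twoSidedIdeal (g * s) := by
  obtain ⟨c, hc, hsc, hJ⟩ := exists_isIdempotentElem_eq_mul_mul_twoSidedIdeal_eq hs hg h
  have hgc : g * c ∈ twoSidedIdeal (g * s) :=
    ⟨1, c * s, by rw [one_mul]; nth_rw 1 [← hsc]; simp only [mul_assoc]⟩
  exact mem_twoSidedIdeal_trans (hrect.mem_twoSidedIdeal_mul hg hc hJ.symm) hgc

lemma mem_twoSidedIdeal_mul_of_regular_left (hrect : IsRectangular M) (hu : u = u * p * u)
    (hv : v = v * q * v) (h : v ∈ twoSidedIdeal u) : v ∈ twoSidedIdeal (u * v) := by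
  have hvq : v * q ∈ twoSidedIdeal (p * u) :=
    mem_twoSidedIdeal_trans ⟨1, q, by rw [one_mul]⟩
      (mem_twoSidedIdeal_trans h ⟨u, 1, by rw [mul_one, ← mul_assoc, ← hu]⟩)
  have key := hrect.mem_twoSidedIdeal_mul_of_isIdempotentElem_left
    (isIdempotentElem_mul_left_of_eq_mul_mul hu) (isIdempotentElem_mul_right_of_eq_mul_mul hv) hvq
  exact mem_twoSidedIdeal_trans ⟨1, v, by rw [one_mul, ← hv]⟩
    (mem_twoSidedIdeal_trans key ⟨p, q, by simp only [mul_assoc]⟩)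

lemma mem_twoSidedIdeal_mul_of_regular_right (hrect : IsRectangular M) (hu : u = u * p * u)
    (hv : v = v * q * v) (h : u ∈ twoSidedIdeal v) : u ∈ twoSidedIdeal (u * v) := by
  have hpu : p * u ∈ twoSidedIdeal (v * q) :=
    mem_twoSidedIdeal_trans ⟨p, 1, by rw [mul_one]⟩
      (mem_twoSidedIdeal_trans h ⟨1, v, by rw [one_mul, ← hv]⟩)
  have key := hrect.mem_twoSidedIdeal_mul_of_isIdempotentElem_right
    (isIdempotentElem_mul_right_of_eq_mul_mul hv) (isIdempotentElem_mul_left_of_eq_mul_mul hu) hpu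
  exact mem_twoSidedIdeal_trans ⟨u, 1, by rw [mul_one, ← mul_assoc, ← hu]⟩
    (mem_twoSidedIdeal_trans key ⟨p, q, by simp only [mul_assoc]⟩)

lemma leftIdeal_mul_eq_of_regular [Finite M] (hrect : IsRectangular M) (hu : u = u * p * u)
    (hv : v = v * q * v) (h : v ∈ twoSidedIdeal u) : leftIdeal (u * v) = leftIdeal v :=
  leftIdeal_mul_eq_of_mem_twoSidedIdeal_mul (hrect.mem_twoSidedIdeal_mul_of_regular_left hu hv h)

lemma rightIdeal_mul_eq_of_regular [Finite M] (hrect : IsRectangular M) (hu : u = u * p * u)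
    (hv : v = v * q * v) (h : u ∈ twoSidedIdeal v) : rightIdeal (u * v) = rightIdeal u :=
  rightIdeal_mul_eq_of_mem_twoSidedIdeal_mul (hrect.mem_twoSidedIdeal_mul_of_regular_right hu hv h)

end IsRectangular

end Rectangular

section Factorization

variable {M : Type*} [Monoid M] {e f m : M}

lemma exists_mul_eq_of_forall_split
    (hsplit : ∀ s t, m = s * t → f ∈ twoSidedIdeal s ∨ e ∈ twoSidedIdeal t) (t : M)
    (ht : e ∈ twoSidedIdeal t) (l : List M) (hl : ∀ r ∈ l, ∃ w, r = r * w * r) (b : M)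
    (hm : m = b * (l.prod * t)) (hb : f ∈ twoSidedIdeal b) :
    ∃ p q, m = b * p * (q * t) ∧ f ∈ twoSidedIdeal (b * p) ∧
      e ∈ twoSidedIdeal (q * t) := by
  induction l generalizing b with
  | nil => exact ⟨1, 1, by simpa using hm, by simpa using hb, by simpa using ht⟩
  | cons r l ih =>
    have hm' : m = b * r * (l.prod * t) := by rw [hm, List.prod_cons]; simp only [mul_assoc]
    by_cases hbr : f ∈ twoSidedIdeal (b * r)
    · obtain ⟨p, q, hpq, hp, hq⟩ :=
        ih (fun x hx => hl x (List.mem_cons_of_mem r hx)) (b * r) hm' hbr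
      exact ⟨r * p, q, by rw [hpq]; simp only [mul_assoc], by rwa [← mul_assoc], hq⟩
    · obtain ⟨w, hw⟩ := hl r List.mem_cons_self
      have hsplit' : m = b * r * w * (r * (l.prod * t)) := by
        conv_lhs => rw [hm', hw]
        simp only [mul_assoc]
      refine ⟨1, r * l.prod, by simpa only [mul_one, List.prod_cons, mul_assoc] using hm,
        by rwa [mul_one], ?_⟩
      rw [mul_assoc r]
      exact (hsplit _ _ hsplit').resolve_left fun hf =>
        hbr (mem_twoSidedIdeal_trans hf ⟨1, w, by rw [one_mul]⟩)

lemma exists_mul_eq_leftIdeal_eq_rightIdeal_eq [Finite M] (hm : m = f * m * e) (l : List M)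
    (hl : ∀ r ∈ l, ∃ w, r = r * w * r) (hlm : l.prod = m)
    (hsplit : ∀ s t, m = s * t → f ∈ twoSidedIdeal s ∨ e ∈ twoSidedIdeal t) :
    ∃ a b, m = b * a ∧ leftIdeal a = leftIdeal e ∧ rightIdeal b = rightIdeal f := by
  have hm' : m = f * (l.prod * e) := by rw [hlm, ← mul_assoc]; exact hm
  obtain ⟨p, q, hpq, hp, hq⟩ := exists_mul_eq_of_forall_split hsplit e
    (mem_twoSidedIdeal_self e) l hl f hm' (mem_twoSidedIdeal_self f)
  exact ⟨q * e, f * p, hpq, leftIdeal_mul_eq_of_mem_twoSidedIdeal_mul hq,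
    rightIdeal_mul_eq_of_mem_twoSidedIdeal_mul hp⟩

end Factorization

section Idempotents

variable {M : Type*} [Monoid M] {a e m : M}

lemma exists_eq_mul_mul_of_leftIdeal_eq (he : IsIdempotentElem e)
    (h : leftIdeal a = leftIdeal e) : ∃ w, a = a * w * a := by
  obtain ⟨x, hx⟩ : a ∈ leftIdeal e := h ▸ mem_leftIdeal_self a
  obtain ⟨w, hw⟩ : e ∈ leftIdeal a := h ▸ mem_leftIdeal_self e
  refine ⟨w, ?_⟩
  calc a = x * e * e := by rw [mul_assoc, he.eq, hx]
    _ = a * w * a := by rw [← hx, hw, mul_assoc]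

lemma exists_eq_mul_mul_of_rightIdeal_eq (he : IsIdempotentElem e)
    (h : rightIdeal a = rightIdeal e) : ∃ w, a = a * w * a := by
  obtain ⟨x, hx⟩ : a ∈ rightIdeal e := h ▸ mem_rightIdeal_self a
  obtain ⟨w, hw⟩ : e ∈ rightIdeal a := h ▸ mem_rightIdeal_self e
  refine ⟨w, ?_⟩
  calc a = e * (e * x) := by rw [← mul_assoc, he.eq, hx]
    _ = a * w * a := by rw [← hx, hw]

lemma exists_inverse_of_mem_leftIdeal_of_mem_rightIdeal (he : IsIdempotentElem e)
    (hm : m = e * m * e) (hl : e ∈ leftIdeal m) (hr : e ∈ rightIdeal m) :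
    ∃ u, u = e * u * e ∧ u * m = e ∧ m * u = e := by
  obtain ⟨x, hx⟩ := hl
  obtain ⟨y, hy⟩ := hr
  have hem : e * m = m := by rw [hm, ← mul_assoc, ← mul_assoc, he.eq]
  have hme : m * e = m := by rw [hm, mul_assoc, he.eq]
  refine ⟨e * x * e, by rw [← mul_assoc e, ← mul_assoc e, he.eq, mul_assoc _ e e, he.eq],
    by rw [mul_assoc _ e m, hem, mul_assoc, ← hx, he.eq], ?_⟩
  calc m * (e * x * e) = m * x * e := by rw [← mul_assoc, ← mul_assoc, hme]
    _ = m * (x * m) * y := by rw [hy]; simp only [mul_assoc]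
    _ = e := by rw [← hx, hme, ← hy]

end Idempotents

/-- Almost irreducible morphisms in the Karoubi envelope of a finite rectangular monoid
generated by its regular elements. -/
theorem almost_irreducible_in_regular_generated_rectangular_monoid
    {M : Type*} [Monoid M] [Fintype M] (hrect : IsRectangular M)
    (hgen : ∀ m : M, ∃ l : List M, (∀ x ∈ l, ∃ u : M, x = x * u * x) ∧ l.prod = m)
    (e f m : M) (he : e * e = e) (hf : f * f = f) (hm : m = f * m * e)
    (hair : ¬ ∃ s t : M, m = s * t ∧ s ∈ nup (twoSidedIdeal f) ∧ t ∈ nup (twoSidedIdeal e)) :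
    -- (1) incomparable case: split mono followed by split epi
    (¬ twoSidedIdeal e ⊆ twoSidedIdeal f → ¬ twoSidedIdeal f ⊆ twoSidedIdeal e →
      ∃ a b : M, m = b * a ∧ leftIdeal a = leftIdeal e ∧ rightIdeal b = rightIdeal f) ∧
    -- (2) `X ⊊ Y`: split monomorphism
    (twoSidedIdeal e ⊂ twoSidedIdeal f → leftIdeal m = leftIdeal e) ∧
    -- (3) `Y ⊊ X`: split epimorphism
    (twoSidedIdeal f ⊂ twoSidedIdeal e → rightIdeal m = rightIdeal f) ∧
    -- (4) `e = f`: `m` is a unit of `e*M*e`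
    (e = f → ∃ u : M, u = e * u * e ∧ u * m = e ∧ m * u = e) ∧
    -- converses to (2), (3), (4)
    (twoSidedIdeal e ⊂ twoSidedIdeal f → ∀ m' : M, m' = f * m' * e →
      leftIdeal m' = leftIdeal e →
      ¬ ∃ s t : M, m' = s * t ∧ s ∈ nup (twoSidedIdeal f) ∧ t ∈ nup (twoSidedIdeal e)) ∧
    (twoSidedIdeal f ⊂ twoSidedIdeal e → ∀ m' : M, m' = f * m' * e →
      rightIdeal m' = rightIdeal f →
      ¬ ∃ s t : M, m' = s * t ∧ s ∈ nup (twoSidedIdeal f) ∧ t ∈ nup (twoSidedIdeal e)) ∧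
    (e = f → ∀ m' : M, m' = e * m' * e →
      (∃ u : M, u = e * u * e ∧ u * m' = e ∧ m' * u = e) →
      ¬ ∃ s t : M, m' = s * t ∧ s ∈ nup (twoSidedIdeal f) ∧ t ∈ nup (twoSidedIdeal e)) := by
  have hsplit : ∀ s t, m = s * t → f ∈ twoSidedIdeal s ∨ e ∈ twoSidedIdeal t := by
    intro s t hst
    by_contra! h
    exact hair ⟨s, t, hst, mem_nup_twoSidedIdeal_iff.2 h.1, mem_nup_twoSidedIdeal_iff.2 h.2⟩
  obtain ⟨l, hl, hlm⟩ := hgen m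
  obtain ⟨a, b, rfl, ha, hb⟩ := exists_mul_eq_leftIdeal_eq_rightIdeal_eq hm l hl hlm hsplit
  obtain ⟨p, hp⟩ := exists_eq_mul_mul_of_leftIdeal_eq he ha
  obtain ⟨q, hq⟩ := exists_eq_mul_mul_of_rightIdeal_eq hf hb
  have hJa := twoSidedIdeal_eq_of_leftIdeal_eq ha
  have hJb := twoSidedIdeal_eq_of_rightIdeal_eq hb
  have hL : twoSidedIdeal e ⊆ twoSidedIdeal f → leftIdeal (b * a) = leftIdeal e := fun hef =>
    (hrect.leftIdeal_mul_eq_of_regular hq hp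
      (hJb ▸ hef (hJa ▸ mem_twoSidedIdeal_self a))).trans ha
  have hR : twoSidedIdeal f ⊆ twoSidedIdeal e → rightIdeal (b * a) = rightIdeal f := fun hfe =>
    (hrect.rightIdeal_mul_eq_of_regular hq hp
      (hJa ▸ hfe (hJb ▸ mem_twoSidedIdeal_self b))).trans hb
  refine ⟨fun _ _ => ⟨a, b, rfl, ha, hb⟩, fun h => hL h.subset, fun h => hR h.subset,
    ?_, ?_, ?_, ?_⟩
  · rintro rfl
    exact exists_inverse_of_mem_leftIdeal_of_mem_rightIdeal he hm
      (hL le_rfl ▸ mem_leftIdeal_self e) (hR le_rfl ▸ mem_rightIdeal_self e)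
  · rintro - m' - hm' ⟨s, t, rfl, -, ht⟩
    exact notMem_nup_of_mem_leftIdeal_mul (hm' ▸ mem_leftIdeal_self e) ht
  · rintro - m' - hm' ⟨s, t, rfl, hs, -⟩
    exact notMem_nup_of_mem_rightIdeal_mul (hm' ▸ mem_rightIdeal_self f) hs
  · rintro - m' - ⟨u, -, hu, -⟩ ⟨s, t, rfl, -, ht⟩
    exact notMem_nup_of_mem_leftIdeal_mul ⟨u, hu.symm⟩ ht
end

section
/- Let M be a finite monoid in the class DG (every conjugacy class of idempotents is a singleton: for idempotents e, f, MeM = MfM implies e = f). Let e, f ∈ M be idempotents, X = MeM, Y = MfM, and m ∈ M. Then the following are equivalent: (a) m = f*m*e, m ∉ nup(Y)·nup(X), and m is not regular (i.e. m : e → f is an irreducible morphism of the Karoubi envelope of M); (b) e_R(m) = e, e_L(m) = f, m ∉ nup(Y)·nup(X), and m is not regular. -/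
/-- Membership in the minimal ideal of a submonoid `S` of `M`: `x ∈ S` and `x` lies in
every nonempty two-sided ideal of `S`, i.e. `x ∈ SyS` for all `y ∈ S`. -/
def InMinimalIdeal {M : Type*} [Monoid M] (S : Set M) (x : M) : Prop :=
  x ∈ S ∧ ∀ y ∈ S, ∃ a ∈ S, ∃ b ∈ S, x = a * y * b

/-- The right stabilizer `St_R(m) = {n | m*n = m}`. -/
def StR {M : Type*} [Monoid M] (m : M) : Set M := {n | m * n = m}

/-- The left stabilizer `St_L(m) = {n | n*m = m}`. -/
def StL {M : Type*} [Monoid M] (m : M) : Set M := {n | n * m = m}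


section aux
variable {M : Type*} [Monoid M]

/-- In a finite monoid every element has an idempotent power with positive exponent. -/
lemma exists_idem_pow_s13 [Finite M] (x : M) : ∃ n, 0 < n ∧ x ^ n * x ^ n = x ^ n := by
  obtain ⟨i, j, hij, hx⟩ := Finite.exists_ne_map_eq_of_infinite (fun n : ℕ => x ^ (n + 1))
  wlog hlt : i < j generalizing i j
  · exact this j i hij.symm hx.symm (by omega)
  set b := i + 1 with hb
  set d := j - i with hd
  have hdpos : 0 < d := by omega
  have hstep : ∀ s, b ≤ s → x ^ (s + d) = x ^ s := by
    intro s hs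
    have : x ^ (b + d) = x ^ b := by
      have : b + d = j + 1 := by omega
      rw [this]; exact hx.symm
    calc x ^ (s + d) = x ^ (s - b) * x ^ (b + d) := by rw [← pow_add]; congr 1; omega
      _ = x ^ (s - b) * x ^ b := by rw [this]
      _ = x ^ s := by rw [← pow_add]; congr 1; omega
  have key : ∀ c, x ^ (b * d + c * d) = x ^ (b * d) := by
    intro c
    induction c with
    | zero => simp
    | succ c ih =>
      have : b * d + (c + 1) * d = (b * d + c * d) + d := by ring
      rw [this, hstep _ (by nlinarith), ih]
  refine ⟨b * d, by positivity, ?_⟩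
  rw [← pow_add]
  have : b * d + b * d = b * d + b * d := rfl
  calc x ^ (b * d + b * d) = x ^ (b * d) := key b

lemma iter_left (m u v : M) (h : m = m * u * m * v) :
    ∀ i, m = (m * u) ^ i * m * v ^ i := by
  intro i
  induction i with
  | zero => simp
  | succ i ih =>
    have h2 : (m * u) ^ (i + 1) * m * v ^ (i + 1) = (m * u) ^ i * (m * u * m * v) * v ^ i := by
      rw [pow_succ, pow_succ']
      simp only [mul_assoc]
    rw [h2, ← h]; exact ih

lemma iter_right (m u v : M) (h : m = u * m * (v * m)) :
    ∀ i, m = u ^ i * m * (v * m) ^ i := by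
  intro i
  induction i with
  | zero => simp
  | succ i ih =>
    have h2 : u ^ (i + 1) * m * (v * m) ^ (i + 1) = u ^ i * (u * m * (v * m)) * (v * m) ^ i := by
      rw [pow_succ, pow_succ']
      simp only [mul_assoc]
    rw [h2, ← h]; exact ih

/-- `m = m*u*m*v` implies `m` is regular. -/
lemma regular_of_mumv [Finite M] (m u v : M) (h : m = m * u * m * v) :
    ∃ w, m = m * w * m := by
  obtain ⟨n, hn, hidem⟩ := exists_idem_pow_s13 (m * u)
  have h1 : m = (m * u) ^ n * m * v ^ n := iter_left m u v h n
  have h2 : (m * u) ^ n * m = m := by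
    have h3 : (m * u) ^ n * m = (m * u) ^ n * ((m * u) ^ n * m * v ^ n) :=
      congrArg (fun x => (m * u) ^ n * x) h1
    rw [h3, ← mul_assoc, ← mul_assoc, hidem]
    exact h1.symm
  obtain ⟨k, rfl⟩ : ∃ k, n = k + 1 := ⟨n - 1, by omega⟩
  refine ⟨u * (m * u) ^ k, ?_⟩
  calc m = (m * u) ^ (k + 1) * m := h2.symm
    _ = m * (u * (m * u) ^ k) * m := by rw [pow_succ']; simp only [mul_assoc]

/-- `m = u*m*v*m` implies `m` is regular. -/
lemma regular_of_umvm [Finite M] (m u v : M) (h : m = u * m * v * m) :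
    ∃ w, m = m * w * m := by
  obtain ⟨n, hn, hidem⟩ := exists_idem_pow_s13 (v * m)
  have h' : m = u * m * (v * m) := by rw [← mul_assoc]; exact h
  have h1 : m = u ^ n * m * (v * m) ^ n := iter_right m u v h' n
  have h2 : m * (v * m) ^ n = m := by
    have h3 : m * (v * m) ^ n = u ^ n * m * (v * m) ^ n * (v * m) ^ n :=
      congrArg (fun x => x * (v * m) ^ n) h1
    rw [h3, mul_assoc (u ^ n * m), hidem]
    exact h1.symm
  obtain ⟨k, rfl⟩ : ∃ k, n = k + 1 := ⟨n - 1, by omega⟩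
  refine ⟨(v * m) ^ k * v, ?_⟩
  calc m = m * (v * m) ^ (k + 1) := h2.symm
    _ = m * ((v * m) ^ k * v) * m := by rw [pow_succ]; simp only [mul_assoc]

lemma list_prod_mem_of (S : Set M) (h1 : (1 : M) ∈ S)
    (hmul : ∀ a ∈ S, ∀ b ∈ S, a * b ∈ S) :
    ∀ l : List M, (∀ x ∈ l, x ∈ S) → l.prod ∈ S := by
  intro l
  induction l with
  | nil => intro _; simpa using h1
  | cons a t ih =>
    intro hx
    rw [List.prod_cons]
    exact hmul a (hx a (by simp)) t.prod (ih fun x hxt => hx x (by simp [hxt]))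

/-- The idempotent in the minimal ideal of a finite submonoid. -/
lemma exists_min_idem [Fintype M] (S : Set M) (h1 : (1 : M) ∈ S)
    (hmul : ∀ a ∈ S, ∀ b ∈ S, a * b ∈ S) :
    ∃ k ∈ S, k * k = k ∧ ∀ y ∈ S, ∃ a ∈ S, ∃ b ∈ S, k = a * y * b := by
  classical
  set L : List M := (Finset.univ.filter (· ∈ S)).toList with hL
  have hLS : ∀ x ∈ L, x ∈ S := by
    intro x hx
    have := Finset.mem_toList.mp hx
    simpa using (Finset.mem_filter.mp this).2
  have hpS : L.prod ∈ S := list_prod_mem_of S h1 hmul L hLS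
  have hpow : ∀ n : ℕ, L.prod ^ n ∈ S := by
    intro n
    induction n with
    | zero => simpa using h1
    | succ n ih => rw [pow_succ]; exact hmul _ ih _ hpS
  have hsplit : ∀ y ∈ S, ∃ a ∈ S, ∃ b ∈ S, L.prod = a * y * b := by
    intro y hy
    have hyL : y ∈ L := by
      rw [hL, Finset.mem_toList, Finset.mem_filter]
      exact ⟨Finset.mem_univ y, hy⟩
    obtain ⟨l₁, l₂, hsp⟩ := List.append_of_mem hyL
    refine ⟨l₁.prod, ?_, l₂.prod, ?_, ?_⟩
    · exact list_prod_mem_of S h1 hmul l₁ (fun x hx => hLS x (by rw [hsp]; simp [hx]))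
    · exact list_prod_mem_of S h1 hmul l₂ (fun x hx => hLS x (by rw [hsp]; simp [hx]))
    · rw [hsp, List.prod_append, List.prod_cons, mul_assoc]
  obtain ⟨n, hn, hidem⟩ := exists_idem_pow_s13 L.prod
  obtain ⟨j, rfl⟩ : ∃ j, n = j + 1 := ⟨n - 1, by omega⟩
  refine ⟨L.prod ^ (j + 1), hpow _, hidem, ?_⟩
  intro y hy
  obtain ⟨a, haS, b, hbS, hab⟩ := hsplit y hy
  refine ⟨L.prod ^ j * a, hmul _ (hpow j) _ haS, b, hbS, ?_⟩
  rw [pow_succ, hab]; simp only [mul_assoc]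

end aux
/-- In a finite monoid in the class `DG`, for idempotents `e, f` with `X = MeM`,
`Y = MfM`, an element `m` is an irreducible morphism `e → f` of the Karoubi envelope
if and only if `e_R(m) = e`, `e_L(m) = f`, `m ∉ nup(Y)·nup(X)` and `m` is not regular.
Here `e_R(m) = e` is expressed as: `e` is an idempotent in the minimal ideal of
`St_R(m)` (and dually for `e_L(m) = f`). -/
theorem irreducible_morphisms_in_DG {M : Type*} [Monoid M] [Fintype M]
    (hDG : ∀ e f : M, e * e = e → f * f = f → twoSidedIdeal e = twoSidedIdeal f → e = f)
    (e f m : M) (he : e * e = e) (hf : f * f = f) :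
    (m = f * m * e ∧
      (¬ ∃ s t : M, m = s * t ∧ s ∈ nup (twoSidedIdeal f) ∧ t ∈ nup (twoSidedIdeal e)) ∧
      ¬ ∃ u : M, m = m * u * m) ↔
    (InMinimalIdeal (StR m) e ∧ InMinimalIdeal (StL m) f ∧
      (¬ ∃ s t : M, m = s * t ∧ s ∈ nup (twoSidedIdeal f) ∧ t ∈ nup (twoSidedIdeal e)) ∧
      ¬ ∃ u : M, m = m * u * m) := by
  constructor
  · rintro ⟨hm, hnup, hnreg⟩
    have me : m * e = m := by
      calc m * e = f * m * e * e := by conv_lhs => rw [hm]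
        _ = f * m * (e * e) := by rw [mul_assoc]
        _ = f * m * e := by rw [he]
        _ = m := hm.symm
    have fm : f * m = m := by
      calc f * m = f * (f * m * e) := by conv_lhs => rw [hm]
        _ = f * f * m * e := by simp only [mul_assoc]
        _ = f * m * e := by rw [hf]
        _ = m := hm.symm
    -- m is not in nup(Y), not in nup(X) (else m would be regular)
    have notYm : ¬ twoSidedIdeal f ⊆ twoSidedIdeal m := by
      intro hY
      obtain ⟨a, b, hab⟩ := hY (show f ∈ twoSidedIdeal f from ⟨1, 1, by simp⟩)
      have hreg : m = a * m * b * m := by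
        calc m = f * m := fm.symm
          _ = a * m * b * m := by rw [hab]
      exact hnreg (regular_of_umvm m a b hreg)
    have notXm : ¬ twoSidedIdeal e ⊆ twoSidedIdeal m := by
      intro hX
      obtain ⟨a, b, hab⟩ := hX (show e ∈ twoSidedIdeal e from ⟨1, 1, by simp⟩)
      have hreg : m = m * a * m * b := by
        calc m = m * e := me.symm
          _ = m * (a * m * b) := by rw [hab]
          _ = m * a * m * b := by simp only [mul_assoc]
      exact hnreg (regular_of_mumv m a b hreg)
    -- right stabilizer
    obtain ⟨k, hkS, hkk, hkmin⟩ := exists_min_idem (StR m) (mul_one m)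
      (fun a ha b hb => show m * (a * b) = m by rw [← mul_assoc, ha, hb])
    have hXk : twoSidedIdeal e ⊆ twoSidedIdeal k := by
      by_contra hns
      exact hnup ⟨m, k, hkS.symm, notYm, hns⟩
    have hek : e = k := by
      apply hDG e k he hkk
      apply Set.Subset.antisymm hXk
      rintro x ⟨c, d, rfl⟩
      obtain ⟨a', _, b', _, hk⟩ := hkmin e me
      exact ⟨c * a', b' * d, by rw [hk]; simp only [mul_assoc]⟩
    -- left stabilizer
    obtain ⟨k', hkS', hkk', hkmin'⟩ := exists_min_idem (StL m) (one_mul m)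
      (fun a ha b hb => show (a * b) * m = m by rw [mul_assoc, hb, ha])
    have hYk : twoSidedIdeal f ⊆ twoSidedIdeal k' := by
      by_contra hns
      exact hnup ⟨k', m, hkS'.symm, hns, notXm⟩
    have hfk : f = k' := by
      apply hDG f k' hf hkk'
      apply Set.Subset.antisymm hYk
      rintro x ⟨c, d, rfl⟩
      obtain ⟨a', _, b', _, hk⟩ := hkmin' f fm
      exact ⟨c * a', b' * d, by rw [hk]; simp only [mul_assoc]⟩
    refine ⟨⟨me, fun y hy => ?_⟩, ⟨fm, fun y hy => ?_⟩, hnup, hnreg⟩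
    · rw [hek]; exact hkmin y hy
    · rw [hfk]; exact hkmin' y hy
  · rintro ⟨⟨hme, -⟩, ⟨hfm, -⟩, h3, h4⟩
    refine ⟨?_, h3, h4⟩
    have hme' : m * e = m := hme
    have hfm' : f * m = m := hfm
    rw [hfm', hme']
end
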